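/- For the 45-triangle 3-vertex cover Y of a 15-triangle 1-vertex complex X in which every edge of X lies in exactly 3 triangle-sides, every edge of Y lies in exactly 3 triangle-sides, and the covering map Y → X is 3-to-1 on both triangles and edges. -/
import Mathlib


/-- The edge list of a triangle `(xᵢ, xⱼ, xₖ)` of the 1-vertex complex `X`. -/
def sidesX (tri : Fin 15 → Fin 15 × Fin 15 × Fin 15) (t : Fin 15) : List (Fin 15) :=
  [(tri t).1, (tri t).2.1, (tri t).2.2]

/-- The edge list of the lifted triangle `(xᵢᵐ, xⱼᵐ⁺¹, xₖᵐ⁺²)` of the 3-vertex cover `Y`,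
indexed by a triangle of `X` and `m ∈ ℤ/3`. -/
def sidesY (tri : Fin 15 → Fin 15 × Fin 15 × Fin 15) (tm : Fin 15 × ZMod 3) :
    List (Fin 15 × ZMod 3) :=
  [((tri tm.1).1, tm.2), ((tri tm.1).2.1, tm.2 + 1), ((tri tm.1).2.2, tm.2 + 2)]

lemma my_inner_sum (tri : Fin 15 → Fin 15 × Fin 15 × Fin 15) (t : Fin 15) (x : Fin 15)
    (m : ZMod 3) :
    ∑ n : ZMod 3, (sidesY tri (t, n)).count (x, m) = (sidesX tri t).count x := by
  have h0 : ∀ m : ZMod 3, ∑ n : ZMod 3, (if n = m then 1 else 0) = 1 := by decide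
  have h1 : ∀ m : ZMod 3, ∑ n : ZMod 3, (if n + 1 = m then 1 else 0) = 1 := by decide
  have h2 : ∀ m : ZMod 3, ∑ n : ZMod 3, (if n + 2 = m then 1 else 0) = 1 := by decide
  simp only [sidesY, sidesX, List.count_cons, List.count_nil, Prod.mk.injEq,
    beq_iff_eq, decide_eq_true_eq]
  by_cases e1 : (tri t).1 = x <;> by_cases e2 : (tri t).2.1 = x <;>
    by_cases e3 : (tri t).2.2 = x <;>
    simp [e1, e2, e3, Finset.sum_add_distrib, h0, h1, h2]

/-- For the 45-triangle 3-vertex cover `Y` of a 15-triangle 1-vertex complex `X` in which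
every edge lies in exactly 3 triangle-sides, every edge of `Y` lies in exactly 3
triangle-sides, and the covering map `Y → X` is 3-to-1 on both triangles and edges. -/
theorem stmt18 (tri : Fin 15 → Fin 15 × Fin 15 × Fin 15)
    (hthick : ∀ e : Fin 15, ∑ t, (sidesX tri t).count e = 3) :
    (∀ e : Fin 15 × ZMod 3, ∑ tm : Fin 15 × ZMod 3, (sidesY tri tm).count e = 3) ∧
    (∀ t : Fin 15, Fintype.card {tm : Fin 15 × ZMod 3 // tm.1 = t} = 3) ∧
    (∀ e : Fin 15, Fintype.card {em : Fin 15 × ZMod 3 // em.1 = e} = 3) := by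
  refine ⟨?_, ?_, ?_⟩
  · rintro ⟨x, m⟩
    rw [Fintype.sum_prod_type]
    calc ∑ t, ∑ n : ZMod 3, (sidesY tri (t, n)).count (x, m)
        = ∑ t, (sidesX tri t).count x := by
          exact Finset.sum_congr rfl fun t _ => my_inner_sum tri t x m
      _ = 3 := hthick x
  all_goals
    intro t
    rw [Fintype.card_congr (⟨fun s => s.1.2, fun m => ⟨(t, m), rfl⟩,
      by rintro ⟨⟨a, b⟩, rfl⟩; rfl, fun m => rfl⟩ :
        {tm : Fin 15 × ZMod 3 // tm.1 = t} ≃ ZMod 3)]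
    decide
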